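/- arXiv:2409.13087 — 3 statements merged into one kernel-verified Lean document; each statement's English description precedes it below -/
import Mathlib

section
/- For every integer n ≥ 2, the forward increment satisfies Δ_{n+1} = D_n − (h_4(n) − h_2(n)), where Δ_{n+1} = D_{n+1} − D_n. -/
/-- The score of a binary sequence `x` of length `n` (indices `0,…,n-1`, with `true` = heads = 1
and `false` = tails = 0): the number of consecutive pairs `(1,1)` minus the number of
consecutive pairs `(1,0)`. -/
def scoreSeq (n : ℕ) (x : Fin n → Bool) : ℤ :=
  ((Finset.univ.filter fun i : Fin (n - 1) =>
      x ⟨i.val, by have := i.isLt; omega⟩ = true ∧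
      x ⟨i.val + 1, by have := i.isLt; omega⟩ = true).card : ℤ) -
  ((Finset.univ.filter fun i : Fin (n - 1) =>
      x ⟨i.val, by have := i.isLt; omega⟩ = true ∧
      x ⟨i.val + 1, by have := i.isLt; omega⟩ = false).card : ℤ)

/-- `Dn n` : the number of binary `n`-sequences with negative score minus the number
with positive score. -/
def Dn (n : ℕ) : ℤ :=
  ((Finset.univ.filter fun x : Fin n → Bool => scoreSeq n x < 0).card : ℤ) -
  ((Finset.univ.filter fun x : Fin n → Bool => 0 < scoreSeq n x).card : ℤ)

/-- `Hcnt n s` : the number of binary `n`-sequences ending in 1 (heads) with score `s`. -/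
def Hcnt (n : ℕ) (s : ℤ) : ℕ :=
  (Finset.univ.filter fun x : Fin n → Bool =>
    (∀ i : Fin n, (i : ℕ) = n - 1 → x i = true) ∧ scoreSeq n x = s).card

/-- `h2 n` : the number of binary `n`-sequences ending in 1 with score `1`
(heady close-call wins for Alice). -/
def h2 (n : ℕ) : ℕ := Hcnt n 1

/-- `h4 n` : the number of binary `n`-sequences ending in 1 with score `-1`
(heady close-call wins for Bob). -/
def h4 (n : ℕ) : ℕ := Hcnt n (-1)


/-!
`D n = -∑ sign (S x)`. Appending a coin `b` to a sequence `y` adds `pairScore (last y) b` to the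
score: nothing if `y` ends in tails, `+1` or `-1` if it ends in heads. Hence the two extensions
of `y` together contribute `2 · sign (S y)` to `∑ sign S`, except when `y` ends in heads with
score `∓1`, where one extension lands on score `0`. Counting these close calls gives
`D (n + 2) = 2 D (n + 1) - h₄ (n + 1) + h₂ (n + 1)`.
-/

def pairScore : Bool → Bool → ℤ
  | true, true => 1
  | true, false => -1
  | false, _ => 0

lemma scoreSeq_eq_sum_pairScore (n : ℕ) (x : Fin n → Bool) :
    scoreSeq n x = ∑ i : Fin (n - 1), pairScore (x ⟨i, by omega⟩) (x ⟨i + 1, by omega⟩) := by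
  rw [scoreSeq, ← Finset.sum_boole, ← Finset.sum_boole, ← Finset.sum_sub_distrib]
  refine Finset.sum_congr rfl fun i _ => ?_
  cases x ⟨i, by omega⟩ <;> cases x ⟨i + 1, by omega⟩ <;> rfl

lemma scoreSeq_snoc (n : ℕ) (y : Fin (n + 1) → Bool) (b : Bool) :
    scoreSeq (n + 2) (Fin.snoc y b) = scoreSeq (n + 1) y + pairScore (y (Fin.last n)) b := by
  simp only [scoreSeq_eq_sum_pairScore]
  refine (Fin.sum_univ_castSucc (n := n) _).trans ?_
  congr 1
  · refine Finset.sum_congr rfl fun i _ => ?_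
    simp [Fin.snoc, Nat.succ_lt_succ i.isLt]
  · simp [Fin.snoc, Fin.last]

lemma sign_eq_sub_ite (s : ℤ) : s.sign = (if 0 < s then 1 else 0) - (if s < 0 then 1 else 0) := by
  rcases lt_trichotomy s 0 with h | rfl | h
  · simp [Int.sign_eq_neg_one_of_neg h, h, h.not_gt]
  · simp
  · simp [Int.sign_eq_one_of_pos h, h, h.not_gt]

lemma Dn_eq_neg_sum_sign (n : ℕ) : Dn n = -∑ x : Fin n → Bool, (scoreSeq n x).sign := by
  simp only [Dn, ← Finset.sum_boole, ← Finset.sum_sub_distrib, ← Finset.sum_neg_distrib,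
    sign_eq_sub_ite, neg_sub]

lemma sign_add_pairScore_add_sign_add_pairScore (a : Bool) (s : ℤ) :
    (s + pairScore a true).sign + (s + pairScore a false).sign =
      2 * s.sign + (if a = true ∧ s = -1 then 1 else 0) - (if a = true ∧ s = 1 then 1 else 0) := by
  cases a <;> simp only [pairScore, sign_eq_sub_ite, Bool.false_eq_true, false_and, true_and] <;>
    split_ifs <;> omega

lemma Fin.forall_val_eq_sub_one_imp_iff {n : ℕ} (p : Fin (n + 1) → Prop) :
    (∀ i : Fin (n + 1), (i : ℕ) = n + 1 - 1 → p i) ↔ p (Fin.last n) := by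
  refine ⟨fun h => h _ (by simp), fun h i hi => ?_⟩
  obtain rfl : i = Fin.last n := Fin.ext (by simpa using hi)
  exact h

lemma Hcnt_succ_eq_sum (n : ℕ) (s : ℤ) :
    (Hcnt (n + 1) s : ℤ) =
      ∑ y : Fin (n + 1) → Bool, if y (Fin.last n) = true ∧ scoreSeq (n + 1) y = s then 1 else 0 := by
  simp only [Hcnt, Finset.sum_boole, Fin.forall_val_eq_sub_one_imp_iff]

lemma Fin.sum_pi_succ_eq_sum_snoc {α M : Type*} [Fintype α] [AddCommMonoid M] (n : ℕ)
    (f : (Fin (n + 1) → α) → M) : ∑ x, f x = ∑ y : Fin n → α, ∑ a, f (Fin.snoc y a) := by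
  rw [← (Fin.snocEquiv fun _ => α).sum_comp, Fintype.sum_prod_type_right]
  rfl

lemma Dn_succ_succ (n : ℕ) : Dn (n + 2) = 2 * Dn (n + 1) - h4 (n + 1) + h2 (n + 1) := by
  have hsum : ∑ x : Fin (n + 2) → Bool, (scoreSeq (n + 2) x).sign =
      2 * ∑ y : Fin (n + 1) → Bool, (scoreSeq (n + 1) y).sign + h4 (n + 1) - h2 (n + 1) := by
    simp_rw [Fin.sum_pi_succ_eq_sum_snoc (n := n + 1), Fintype.sum_bool, scoreSeq_snoc,
      sign_add_pairScore_add_sign_add_pairScore, Finset.sum_sub_distrib, Finset.sum_add_distrib,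
      Finset.mul_sum, h4, h2, Hcnt_succ_eq_sum]
  rw [Dn_eq_neg_sum_sign, Dn_eq_neg_sum_sign, hsum]
  ring

/-- Lemma 1: for every `n ≥ 2`, the forward increment satisfies
`Δ_{n+1} = D_n − (h₄(n) − h₂(n))`, where `Δ_{n+1} = D_{n+1} − D_n`. -/
theorem forward_increment (n : ℕ) (hn : 2 ≤ n) :
    Dn (n + 1) - Dn n = Dn n - ((h4 n : ℤ) - (h2 n : ℤ)) := by
  obtain ⟨m, rfl⟩ : ∃ m, n = m + 1 := ⟨n - 1, by omega⟩
  linarith [Dn_succ_succ m]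
end

section
/- For every integer n ≥ 2, h_4(n+1) = h_2(n) + h_4(n). -/
/-!
A word of length `m + 1` ending in heads with `a` pairs `11` and `b` pairs `10` consists of
`a + b + 1` heads in `b + 1` runs and `m - a - b` tails, so there are `C(a+b, a) * C(m-a-b, b)`
of them; this follows by induction on the length, appending one letter at a time. Score `-1`
means `b = a + 1` and score `1` means `a = b + 1`. Term by term, Pascal's rule in the tails factor
splits the count for `h₄(n+1)` into that for `h₄(n)` plus `C(2a+1, a) * C(n-2a-2, a)`, which
is the count for `h₂(n)` because `C(2a+1, a) = C(2a+1, a+1)`.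
-/

open Finset

def pairCount {m : ℕ} (x : Fin (m + 1) → Bool) (p q : Bool) : ℕ :=
  #{i : Fin m | x i.castSucc = p ∧ x i.succ = q}

lemma pairCount_snoc {m : ℕ} (w : Fin (m + 1) → Bool) (c p q : Bool) :
    pairCount (Fin.snoc w c : Fin (m + 2) → Bool) p q =
      pairCount w p q + if w (Fin.last m) = p ∧ c = q then 1 else 0 := by
  simp only [pairCount, card_filter, Fin.sum_univ_castSucc, Fin.succ_castSucc, Fin.snoc_castSucc,
    Fin.succ_last, Fin.snoc_last]

lemma card_filter_last_eq_card_filter_snoc {m : ℕ} (c : Bool)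
    (P : (Fin (m + 2) → Bool) → Prop) [DecidablePred P] :
    #{x : Fin (m + 2) → Bool | x (Fin.last (m + 1)) = c ∧ P x} =
      #{w : Fin (m + 1) → Bool | P (Fin.snoc w c)} := by
  symm
  refine card_nbij' (Fin.snoc · c) Fin.init ?_ ?_ ?_ ?_ <;>
    simp only [coe_filter, mem_univ, true_and]
  · exact fun w hw => ⟨Fin.snoc_last _ _, hw⟩
  · rintro x ⟨rfl, hx⟩
    simpa [Fin.snoc_init_self] using hx
  · exact fun w _ => Fin.init_snoc _ _
  · rintro x ⟨rfl, -⟩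
    exact Fin.snoc_init_self x

def wordCount (m a b : ℕ) (c : Bool) : ℕ :=
  #{x : Fin (m + 1) → Bool |
    x (Fin.last m) = c ∧ pairCount x true true = a ∧ pairCount x true false = b}

lemma wordCount_succ (m a b : ℕ) (c : Bool) :
    wordCount (m + 1) a b c =
      #{w : Fin (m + 1) → Bool | w (Fin.last m) = true ∧
        pairCount w true true + c.toNat = a ∧ pairCount w true false + (!c).toNat = b} +
      wordCount m a b false := by
  rw [wordCount, card_filter_last_eq_card_filter_snoc, ← card_filter_add_card_filter_not
    (fun w : Fin (m + 1) → Bool => w (Fin.last m) = true), filter_filter, filter_filter,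
    wordCount]
  congr 2 <;> ext w <;> cases c <;> cases hw : w (Fin.last m) <;> simp [pairCount_snoc, hw]

lemma wordCount_zero (a b : ℕ) (c : Bool) :
    wordCount 0 a b c = if a = 0 ∧ b = 0 then 1 else 0 := by
  have hx : ∀ x : Fin 1 → Bool, pairCount x true true = 0 ∧ pairCount x true false = 0 := by
    simp [pairCount]
  split_ifs with h
  · obtain ⟨rfl, rfl⟩ := h
    rw [wordCount, card_eq_one]
    refine ⟨fun _ => c, ?_⟩
    ext x
    simp [hx, funext_iff, Fin.forall_fin_one]
  · simp only [wordCount, card_eq_zero, filter_eq_empty_iff]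
    grind

lemma wordCount_succ_succ_true (m a b : ℕ) :
    wordCount (m + 1) (a + 1) b true = wordCount m a b true + wordCount m (a + 1) b false := by
  rw [wordCount_succ]
  simp [wordCount]

lemma wordCount_succ_zero_true (m b : ℕ) :
    wordCount (m + 1) 0 b true = wordCount m 0 b false := by
  simp [wordCount_succ]

lemma wordCount_succ_succ_false (m a b : ℕ) :
    wordCount (m + 1) a (b + 1) false = wordCount m a b true + wordCount m a (b + 1) false := by
  rw [wordCount_succ]
  simp [wordCount]

lemma wordCount_succ_zero_false (m a : ℕ) :
    wordCount (m + 1) a 0 false = wordCount m a 0 false := by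
  simp [wordCount_succ]

/-- A word ending in `false` has `a + b` ones in `b` runs and `m + 1 - a - b` zeros. The `if`
excludes `b = 0 ∧ m < a`, where truncated subtraction would make the product `1`. -/
theorem wordCount_eq_choose (m a b : ℕ) :
    wordCount m a b true =
        (if a + b ≤ m then (a + b).choose a * (m - a - b).choose b else 0) ∧
      wordCount m a b false = (a + b - 1).choose a * (m + 1 - a - b).choose b := by
  induction m generalizing a b with
  | zero =>
    simp only [wordCount_zero]
    constructor
    · split_ifs <;> simp_all
    · rcases a with _ | a <;> rcases b with _ | b <;> simp
  | succ m ih =>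
    constructor
    · rcases a with _ | a
      · rw [wordCount_succ_zero_true, (ih 0 b).2]
        split_ifs with h
        · simp
        · simp [Nat.choose_eq_zero_of_lt (show m + 1 - b < b by omega)]
      · rw [wordCount_succ_succ_true, (ih a b).1, (ih (a + 1) b).2]
        by_cases h : a + b ≤ m
        · obtain ⟨k, rfl⟩ : ∃ k, m = a + b + k := ⟨m - a - b, by omega⟩
          rw [if_pos h, if_pos (by omega), show a + 1 + b - 1 = a + b by omega,
            show a + b + k + 1 - (a + 1) - b = k by omega, show a + b + k - a - b = k by omega,
            show a + 1 + b = a + b + 1 by omega, Nat.choose_succ_succ', add_mul]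
        · rw [if_neg h, if_neg (by omega), show m + 1 - (a + 1) - b = 0 by omega]
          rcases b with _ | b <;> simp
    · rcases b with _ | b
      · rw [wordCount_succ_zero_false, (ih a 0).2]
        simp
      · rw [wordCount_succ_succ_false, (ih a b).1, (ih a (b + 1)).2]
        split_ifs with h
        · obtain ⟨k, rfl⟩ : ∃ k, m = a + b + k := ⟨m - a - b, by omega⟩
          rw [show a + (b + 1) - 1 = a + b by omega,
            show a + b + k + 1 + 1 - a - (b + 1) = k + 1 by omega,
            show a + b + k - a - b = k by omega, show a + b + k + 1 - a - (b + 1) = k by omega,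
            Nat.choose_succ_succ', mul_add]
        · simp [show m + 1 + 1 - a - (b + 1) = 0 by omega, show m + 1 - a - (b + 1) = 0 by omega]

lemma card_filter_eq_succ_eq_sum {α : Type*} (s : Finset α) (t : Finset ℕ) (u v : α → ℕ)
    (hu : ∀ x ∈ s, u x ∈ t) :
    #{x ∈ s | v x = u x + 1} = ∑ a ∈ t, #{x ∈ s | u x = a ∧ v x = a + 1} := by
  rw [card_eq_sum_card_fiberwise fun x hx => hu x (mem_filter.1 hx).1]
  refine sum_congr rfl fun a _ => congrArg card ?_
  ext x
  simp only [mem_filter]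
  grind

lemma scoreSeq_eq_pairCount {m : ℕ} (x : Fin (m + 1) → Bool) :
    scoreSeq (m + 1) x = pairCount x true true - pairCount x true false := rfl

lemma pairCount_mem_range {m : ℕ} (x : Fin (m + 1) → Bool) (p q : Bool) :
    pairCount x p q ∈ range (m + 1) :=
  mem_range.2 <| Nat.lt_succ_of_le <| (card_filter_le _ _).trans_eq (card_fin m)

lemma Hcnt_succ (m : ℕ) (s : ℤ) :
    Hcnt (m + 1) s = #{x : Fin (m + 1) → Bool |
      x (Fin.last m) = true ∧ (pairCount x true true : ℤ) - pairCount x true false = s} := by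
  refine congrArg card (filter_congr fun x _ => and_congr ⟨fun h => h _ rfl, ?_⟩ ?_)
  · intro h i hi
    rwa [show i = Fin.last m from Fin.ext hi]
  · rw [scoreSeq_eq_pairCount]

lemma h4_succ_eq_sum (m : ℕ) :
    h4 (m + 1) = ∑ a ∈ range (m + 1), wordCount m a (a + 1) true := by
  rw [h4, Hcnt_succ]
  have hscore : ∀ x : Fin (m + 1) → Bool,
      (pairCount x true true : ℤ) - pairCount x true false = -1 ↔
        pairCount x true false = pairCount x true true + 1 := fun x => by omega
  simp only [hscore, ← filter_filter]
  rw [card_filter_eq_succ_eq_sum _ _ _ _ fun x _ => pairCount_mem_range x true true]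
  simp only [filter_filter, wordCount]

lemma h2_succ_eq_sum (m : ℕ) :
    h2 (m + 1) = ∑ b ∈ range (m + 1), wordCount m (b + 1) b true := by
  rw [h2, Hcnt_succ]
  have hscore : ∀ x : Fin (m + 1) → Bool,
      (pairCount x true true : ℤ) - pairCount x true false = 1 ↔
        pairCount x true true = pairCount x true false + 1 := fun x => by omega
  simp only [hscore, ← filter_filter]
  rw [card_filter_eq_succ_eq_sum _ _ _ _ fun x _ => pairCount_mem_range x true false]
  simp only [filter_filter, wordCount, and_comm]

lemma wordCount_succ_diag (m a : ℕ) :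
    wordCount (m + 1) a (a + 1) true = wordCount m (a + 1) a true + wordCount m a (a + 1) true := by
  simp only [(wordCount_eq_choose _ _ _).1]
  by_cases h : a + (a + 1) ≤ m
  · obtain ⟨k, rfl⟩ : ∃ k, m = 2 * a + 1 + k := ⟨m - (2 * a + 1), by omega⟩
    rw [if_pos (by omega), if_pos (by omega), if_pos h, show a + (a + 1) = 2 * a + 1 by omega,
      show a + 1 + a = 2 * a + 1 by omega, Nat.choose_symm_half,
      show 2 * a + 1 + k + 1 - a - (a + 1) = k + 1 by omega,
      show 2 * a + 1 + k - (a + 1) - a = k by omega,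
      show 2 * a + 1 + k - a - (a + 1) = k by omega,
      Nat.choose_succ_succ', mul_add]
  · rw [if_neg h, if_neg (show ¬a + 1 + a ≤ m by omega)]
    split_ifs <;> simp [show m + 1 - a - (a + 1) = 0 by omega]

lemma wordCount_true_eq_zero {m a b : ℕ} (h : m < a + b) : wordCount m a b true = 0 := by
  rw [(wordCount_eq_choose m a b).1, if_neg (by omega)]

/-- Lemma 2: for every `n ≥ 2`, `h₄(n+1) = h₂(n) + h₄(n)`. -/
theorem h4_succ (n : ℕ) (hn : 2 ≤ n) : h4 (n + 1) = h2 n + h4 n := by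
  obtain ⟨m, rfl⟩ : ∃ m, n = m + 1 := ⟨n - 1, by omega⟩
  rw [h4_succ_eq_sum, h2_succ_eq_sum, h4_succ_eq_sum, sum_range_succ,
    wordCount_true_eq_zero (by omega), add_zero, ← sum_add_distrib]
  exact sum_congr rfl fun a _ => wordCount_succ_diag m a
end

section
/- Let n ≥ 1 and let s be an integer with s < −⌊n/2⌋ or s > max(0, n−3). Then T_s(n) = 0; that is, no binary n-sequence ending in 0 has score s outside the range −⌊n/2⌋ ≤ s ≤ max(0, n−3). -/
/-- `Tcnt n s` : the number of binary `n`-sequences ending in 0 (tails) with score `s`. -/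
def Tcnt (n : ℕ) (s : ℤ) : ℕ :=
  (Finset.univ.filter fun x : Fin n → Bool =>
    (∀ i : Fin n, (i : ℕ) = n - 1 → x i = false) ∧ scoreSeq n x = s).card

open Finset

def transitionSet {n : ℕ} (x : Fin n → Bool) (a b : Bool) : Finset (Fin (n - 1)) :=
  univ.filter fun i : Fin (n - 1) =>
    x ⟨i.val, by have := i.isLt; omega⟩ = a ∧ x ⟨i.val + 1, by have := i.isLt; omega⟩ = b

lemma Nat.exists_true_false_of_le {f : ℕ → Bool} {a b : ℕ} (hab : a ≤ b) (ha : f a = true)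
    (hb : f b = false) : ∃ i, a ≤ i ∧ i < b ∧ f i = true ∧ f (i + 1) = false := by
  induction b, hab using Nat.le_induction with
  | base => simp_all
  | succ b hab ih =>
    cases hfb : f b with
    | true => exact ⟨b, hab, b.lt_succ_self, hfb, hb⟩
    | false =>
      obtain ⟨i, hai, hib, hi⟩ := ih hfb
      exact ⟨i, hai, by omega, hi⟩

section transitionSet

variable {n : ℕ} (x : Fin n → Bool)

lemma scoreSeq_eq_card_sub_card :
    scoreSeq n x = #(transitionSet x true true) - #(transitionSet x true false) :=
  rfl

lemma disjoint_transitionSet {a b c : Bool} (hbc : b ≠ c) :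
    Disjoint (transitionSet x a b) (transitionSet x a c) := by
  simp only [transitionSet, disjoint_filter]
  rintro i - ⟨-, hb⟩ ⟨-, hc⟩
  exact hbc (hb.symm.trans hc)

lemma card_transitionSet_true_false_le : #(transitionSet x true false) ≤ n / 2 := by
  have not_adjacent : ∀ i ∈ transitionSet x true false, ∀ j ∈ transitionSet x true false,
      j.val ≠ i.val + 1 := by
    intro i hi j hj hji
    simp only [transitionSet, mem_filter] at hi hj
    have : x ⟨j.val, by have := j.isLt; omega⟩ = x ⟨i.val + 1, by have := i.isLt; omega⟩ :=
      congrArg x (Fin.ext hji)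
    simp [hi.2.2, hj.2.1] at this
  calc #(transitionSet x true false) ≤ #(range (n / 2)) := by
        refine card_le_card_of_injOn (fun i => i.val / 2) (fun i _ => ?_) fun i hi j hj hij => ?_
        · have := i.isLt
          simp only [coe_range, Set.mem_Iio]
          omega
        · have := not_adjacent i hi j hj
          have := not_adjacent j hj i hi
          exact Fin.ext (by simp only at hij; omega)
    _ = n / 2 := card_range _

lemma transitionSet_true_false_nonempty (hlast : ∀ i : Fin n, (i : ℕ) = n - 1 → x i = false)
    (h : (transitionSet x true true).Nonempty) : (transitionSet x true false).Nonempty := by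
  obtain ⟨i₀, hi₀⟩ := h
  simp only [transitionSet, mem_filter] at hi₀
  have hi₀n := i₀.isLt
  let f : ℕ → Bool := fun i => if h : i < n then x ⟨i, h⟩ else false
  obtain ⟨i, -, hi, hfi⟩ := Nat.exists_true_false_of_le (f := f) (a := i₀) (b := n - 1)
    (by omega) (by simp [f, dif_pos (show i₀.val < n by omega), hi₀.2.1])
    (by simp [f, dif_pos (show n - 1 < n by omega), hlast ⟨n - 1, by omega⟩ rfl])
  refine ⟨⟨i, hi⟩, ?_⟩
  simpa [transitionSet, f, dif_pos (show i < n by omega), dif_pos (show i + 1 < n by omega)]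
    using hfi

lemma neg_div_two_le_scoreSeq : -((n / 2 : ℕ) : ℤ) ≤ scoreSeq n x := by
  rw [scoreSeq_eq_card_sub_card]
  have := card_transitionSet_true_false_le x
  omega

lemma scoreSeq_le (hlast : ∀ i : Fin n, (i : ℕ) = n - 1 → x i = false) :
    scoreSeq n x ≤ max 0 ((n : ℤ) - 3) := by
  rw [scoreSeq_eq_card_sub_card]
  rcases (transitionSet x true true).eq_empty_or_nonempty with hA | hA
  · simp [hA]
  · have hB := (transitionSet_true_false_nonempty x hlast hA).card_pos
    have hAB : #(transitionSet x true true) + #(transitionSet x true false) ≤ n - 1 := by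
      rw [← card_union_of_disjoint (disjoint_transitionSet x (by decide))]
      exact (card_le_univ _).trans_eq (Fintype.card_fin _)
    omega

end transitionSet

theorem T_eq_zero_general (n : ℕ) (s : ℤ)
    (hs : s < -((n / 2 : ℕ) : ℤ) ∨ max 0 ((n : ℤ) - 3) < s) :
    Tcnt n s = 0 := by
  rw [Tcnt, card_eq_zero, filter_eq_empty_iff]
  rintro x - ⟨hlast, rfl⟩
  have := neg_div_two_le_scoreSeq x
  have := scoreSeq_le x hlast
  omega

/-- Theorem 2: for `n ≥ 1`, `T_s(n) = 0` for `s` outside the range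
`−⌊n/2⌋ ≤ s ≤ max(0, n−3)`. -/
theorem T_eq_zero (n : ℕ) (hn : 1 ≤ n) (s : ℤ)
    (hs : s < -((n / 2 : ℕ) : ℤ) ∨ max 0 ((n : ℤ) - 3) < s) :
    Tcnt n s = 0 :=
  T_eq_zero_general n s hs
end
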